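/- Let D be a directed graph and let r, v, s be vertices of D. Let D' be the directed graph obtained from D by adding one new arc from r to v and one new arc from v to s. Then λ_{D'}(r, s) = λ_D(r, s) + 1. -/

import Mathlib

/-- A finite loopless directed multigraph on vertex set `verts`; the arcs are
recorded as a multiset of ordered pairs `(tail, head)`, so that parallel arcs
are allowed. -/
structure MDigraph (α : Type) where
  verts : Finset α
  arcs : Multiset (α × α)
  tail_mem : ∀ e ∈ arcs, e.1 ∈ verts
  head_mem : ∀ e ∈ arcs, e.2 ∈ verts
  loopless : ∀ e ∈ arcs, e.1 ≠ e.2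

namespace MDigraph

variable {α : Type} [DecidableEq α]

/-- `p` is the vertex sequence of a directed path in `D` from `u` to `v`. -/
def IsDipath (D : MDigraph α) (p : List α) (u v : α) : Prop :=
  p.Nodup ∧ p.head? = some u ∧ p.getLast? = some v ∧
    (∀ x ∈ p, x ∈ D.verts) ∧ List.Chain' (fun x y => (x, y) ∈ D.arcs) p

/-- The multiset of arcs traversed by a directed path given by its vertex sequence. -/
def pathArcs (p : List α) : Multiset (α × α) := ↑(p.zip p.tail)

/-- There exist `k` pairwise arc-disjoint directed paths from `u` to `v` in `D`
(each copy of an arc may be used by at most one of the paths). -/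
def HasArcDisjointPaths (D : MDigraph α) (u v : α) (k : ℕ) : Prop :=
  ∃ P : Fin k → List α, (∀ i, D.IsDipath (P i) u v) ∧
    (∑ i : Fin k, pathArcs (P i)) ≤ D.arcs

/-- `D` is Steiner rooted `k`-arc-connected with root `r` and terminal set `S`:
for every terminal `s ∈ S` there are `k` pairwise arc-disjoint directed `r`-`s` paths. -/
def SteinerRooted (D : MDigraph α) (r : α) (S : Finset α) (k : ℕ) : Prop :=
  ∀ s ∈ S, D.HasArcDisjointPaths r s k

/-- The in-degree of a vertex. -/
def inDeg (D : MDigraph α) (v : α) : ℕ := (D.arcs.filter (fun e => e.2 = v)).card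

/-- The out-degree of a vertex. -/
def outDeg (D : MDigraph α) (v : α) : ℕ := (D.arcs.filter (fun e => e.1 = v)).card

/-- The number of arcs leaving the vertex set `X` (tail in `X`, head outside `X`). -/
def outDegOf (D : MDigraph α) (X : Finset α) : ℕ :=
  (D.arcs.filter (fun e => e.1 ∈ X ∧ e.2 ∉ X)).card

/-- `D` is `3`-regular with respect to root `r`, terminal set `S` and connectivity `k`:
the root has in-degree `0` and out-degree `k`, every terminal has in-degree `k` and
out-degree `0`, and every other vertex has in-degree plus out-degree equal to `3`. -/
def ThreeRegular (D : MDigraph α) (r : α) (S : Finset α) (k : ℕ) : Prop :=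
  D.inDeg r = 0 ∧ D.outDeg r = k ∧ (∀ s ∈ S, D.inDeg s = k ∧ D.outDeg s = 0) ∧
    ∀ v ∈ D.verts, v ≠ r → v ∉ S → D.inDeg v + D.outDeg v = 3

/-- Delete (one copy of) the arc `e` from `D`. -/
def delArc (D : MDigraph α) (e : α × α) : MDigraph α where
  verts := D.verts
  arcs := D.arcs.erase e
  tail_mem := fun a ha => D.tail_mem a (Multiset.mem_of_mem_erase ha)
  head_mem := fun a ha => D.head_mem a (Multiset.mem_of_mem_erase ha)
  loopless := fun a ha => D.loopless a (Multiset.mem_of_mem_erase ha)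

/-- `D` is minimally Steiner rooted `k`-arc-connected: it is Steiner rooted
`k`-arc-connected but deleting any arc destroys this property. -/
def MinSteinerRooted (D : MDigraph α) (r : α) (S : Finset α) (k : ℕ) : Prop :=
  D.SteinerRooted r S k ∧ ∀ e ∈ D.arcs, ¬ (D.delArc e).SteinerRooted r S k

/-- `U` is a tight `s`-cut: `r ∈ U`, `s ∉ U`, and exactly `k` arcs leave `U`. -/
def IsTightCut (D : MDigraph α) (r s : α) (k : ℕ) (U : Finset α) : Prop :=
  r ∈ U ∧ s ∉ U ∧ D.outDegOf U = k

/-- The multiset of arcs of a directed cycle given by its vertex sequence. -/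
def cycleArcs (c : List α) : Multiset (α × α) := ↑(c.zip (c.rotate 1))

/-- `c` is the vertex sequence of a directed cycle in `D`. -/
def IsDicycle (D : MDigraph α) (c : List α) : Prop :=
  c.Nodup ∧ 2 ≤ c.length ∧ cycleArcs c ≤ D.arcs

end MDigraph

/-- `λ_D(u, v)`: the maximum number of pairwise arc-disjoint directed paths
from `u` to `v` in `D` (as an extended natural number). -/
noncomputable def MDigraph.lambda {α : Type} (D : MDigraph α) (u v : α) : ℕ∞ :=
  ⨆ k ∈ {k : ℕ | D.HasArcDisjointPaths u v k}, (k : ℕ∞)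

/-!
The path `r, v, s` along the two new arcs gives `λ_{D'} ≥ λ_D + 1`. Conversely, take `k + 1`
arc-disjoint `r`-`s` paths in `D'`. If one of them starts `r, v, …` and another ends `…, v, s`,
follow the second up to `v` and then the first: this is an `r`-`s` walk in `D`, and a path
shortcutting it replaces both. Otherwise dropping a single suitable path leaves `k` paths in
`D`. When `r ≠ s` every vertex of a path lies on one of its arcs, so only the arc multisets
matter.
-/

namespace Multiset

variable {β γ : Type*} {f : β → Multiset γ} {P : Multiset β} {e : γ} {A : Multiset γ}

lemma mem_sum_map_iff : e ∈ (P.map f).sum ↔ ∃ p ∈ P, e ∈ f p :=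
  mem_join.trans (by simp)

lemma sum_map_erase_le_of_mem [DecidableEq β] [DecidableEq γ] {p : β} (hp : p ∈ P)
    (he : e ∈ f p) (h : (P.map f).sum ≤ e ::ₘ A) : ((P.erase p).map f).sum ≤ A := by
  rw [← sum_map_erase hp, ← cons_erase he, cons_add, cons_le_cons_iff] at h
  exact (le_add_left _ _).trans h

lemma exists_sum_map_erase_le [DecidableEq β] [DecidableEq γ] (hP : P ≠ 0)
    (h : (P.map f).sum ≤ e ::ₘ A) : ∃ p ∈ P, ((P.erase p).map f).sum ≤ A := by
  by_cases he : ∃ p ∈ P, e ∈ f p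
  · obtain ⟨p, hp, hep⟩ := he
    exact ⟨p, hp, sum_map_erase_le_of_mem hp hep h⟩
  · obtain ⟨p, hp⟩ := exists_mem_of_ne_zero hP
    have hnot : e ∉ (P.map f).sum := mem_sum_map_iff.not.2 he
    rw [le_cons_of_notMem hnot, ← sum_map_erase hp] at h
    exact ⟨p, hp, (le_add_left _ _).trans h⟩

lemma exists_ofFn_iff_exists_card_eq {k : ℕ} (Q : Multiset β → Prop) :
    (∃ P : Fin k → β, Q (List.ofFn P)) ↔ ∃ m : Multiset β, card m = k ∧ Q m := by
  refine ⟨fun ⟨P, hP⟩ => ⟨_, by simp, hP⟩, fun ⟨m, hm, hQ⟩ => ?_⟩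
  induction m using Quot.ind with
  | mk l =>
    obtain rfl : l.length = k := hm
    exact ⟨l.get, by rwa [List.ofFn_get]⟩

end Multiset

namespace MDigraph

variable {α : Type}

@[simp] lemma pathArcs_nil : pathArcs ([] : List α) = 0 := rfl

@[simp] lemma pathArcs_singleton (a : α) : pathArcs [a] = 0 := rfl

@[simp] lemma pathArcs_cons_cons (a b : α) (l : List α) :
    pathArcs (a :: b :: l) = (a, b) ::ₘ pathArcs (b :: l) := rfl

lemma pathArcs_append_cons (l₁ : List α) (x : α) (l₂ : List α) :
    pathArcs (l₁ ++ x :: l₂) = pathArcs (l₁ ++ [x]) + pathArcs (x :: l₂) := by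
  induction l₁ with
  | nil => simp
  | cons a l ih =>
    cases l with
    | nil => simp
    | cons b l => simp only [List.cons_append, pathArcs_cons_cons] at ih ⊢; simp [ih]

lemma mem_pathArcs_iff {l : List α} {x y : α} :
    (x, y) ∈ pathArcs l ↔ ∃ l₁ l₂, l = l₁ ++ x :: y :: l₂ := by
  induction l using List.twoStepInduction with
  | nil => simp
  | singleton a => simp [List.cons_eq_append_iff]
  | cons_cons a b l _ ih =>
    rw [pathArcs_cons_cons, Multiset.mem_cons, ih b, Prod.mk.injEq]
    constructor
    · rintro (⟨rfl, rfl⟩ | ⟨l₁, l₂, h⟩)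
      · exact ⟨[], l, rfl⟩
      · exact ⟨a :: l₁, l₂, by rw [h, List.cons_append]⟩
    · rintro ⟨_ | ⟨c, l₁⟩, l₂, h⟩
      · simp only [List.nil_append, List.cons.injEq] at h
        exact Or.inl ⟨h.1.symm, h.2.1.symm⟩
      · simp only [List.cons_append, List.cons.injEq] at h
        exact Or.inr ⟨l₁, l₂, h.2⟩

lemma isChain_of_pathArcs_le {l : List α} {A : Multiset (α × α)} (h : pathArcs l ≤ A) :
    l.IsChain (fun x y => (x, y) ∈ A) :=
  List.isChain_iff_forall_rel_of_append_cons_cons.2 fun _ _ l₁ l₂ hl =>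
    Multiset.mem_of_le h (mem_pathArcs_iff.2 ⟨l₁, l₂, hl⟩)

lemma mem_verts_of_pathArcs_le {D : MDigraph α} {p : List α} {u v x : α}
    (hp : pathArcs p ≤ D.arcs) (hu : p.head? = some u) (hv : p.getLast? = some v)
    (huv : u ≠ v) (hx : x ∈ p) : x ∈ D.verts := by
  match p, hu, hv, hx with
  | [a], hu, hv, _ => simp_all
  | a :: b :: l, _, _, hx =>
    rcases List.mem_cons.1 hx with rfl | hx
    · exact D.tail_mem _ (Multiset.mem_of_le hp (by simp : (x, b) ∈ pathArcs (x :: b :: l)))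
    · rw [← List.map_snd_zip (l₁ := a :: b :: l) (l₂ := b :: l) (by simp)] at hx
      obtain ⟨e, he, rfl⟩ := List.mem_map.1 hx
      exact D.head_mem e (Multiset.mem_of_le hp (Multiset.mem_coe.2 he))

def IsSimpleSeq (p : List α) (u v : α) : Prop :=
  p.Nodup ∧ p.head? = some u ∧ p.getLast? = some v

lemma isDipath_iff_of_ne {D : MDigraph α} {p : List α} {u v : α} (huv : u ≠ v)
    (hp : pathArcs p ≤ D.arcs) : D.IsDipath p u v ↔ IsSimpleSeq p u v :=
  ⟨fun h => ⟨h.1, h.2.1, h.2.2.1⟩, fun ⟨hn, hu, hv⟩ =>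
    ⟨hn, hu, hv, fun _ hx => mem_verts_of_pathArcs_le hp hu hv huv hx,
      isChain_of_pathArcs_le hp⟩⟩

def IsPathFamily (A : Multiset (α × α)) (u v : α) (P : Multiset (List α)) : Prop :=
  (∀ p ∈ P, IsSimpleSeq p u v) ∧ (P.map pathArcs).sum ≤ A

lemma hasArcDisjointPaths_iff_of_ne {D : MDigraph α} {u v : α} {k : ℕ} (huv : u ≠ v) :
    D.HasArcDisjointPaths u v k ↔
      ∃ P : Multiset (List α), Multiset.card P = k ∧ IsPathFamily D.arcs u v P := by
  have hfamily : ∀ P : Multiset (List α),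
      ((∀ p ∈ P, D.IsDipath p u v) ∧ (P.map pathArcs).sum ≤ D.arcs) ↔
        IsPathFamily D.arcs u v P := fun P =>
    and_congr_left fun hle => forall₂_congr fun p hp =>
      isDipath_iff_of_ne huv ((Multiset.le_sum_of_mem (Multiset.mem_map_of_mem _ hp)).trans hle)
  simp only [← hfamily, ← Multiset.exists_ofFn_iff_exists_card_eq, HasArcDisjointPaths]
  simp [List.sum_ofFn]

lemma hasArcDisjointPaths_zero (D : MDigraph α) (u v : α) : D.HasArcDisjointPaths u v 0 :=
  ⟨Fin.elim0, fun i => i.elim0, by simp⟩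

lemma hasArcDisjointPaths_self {D : MDigraph α} {u : α} (hu : u ∈ D.verts) (k : ℕ) :
    D.HasArcDisjointPaths u u k :=
  ⟨fun _ => [u], fun _ => ⟨List.nodup_singleton u, rfl, rfl, by simpa, List.isChain_singleton u⟩,
    by simp⟩

lemma lambda_eq_add_one {D D' : MDigraph α} {u v : α}
    (h : ∀ k, D'.HasArcDisjointPaths u v (k + 1) ↔ D.HasArcDisjointPaths u v k) :
    D'.lambda u v = D.lambda u v + 1 := by
  rw [lambda, lambda, ENat.biSup_add ⟨0, hasArcDisjointPaths_zero D u v⟩]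
  refine le_antisymm (iSup₂_le fun k hk => ?_) (iSup₂_le fun k hk => ?_)
  · cases k with
    | zero => exact bot_le
    | succ k => exact le_iSup₂_of_le k ((h k).1 hk) (by push_cast; rfl)
  · exact le_iSup₂_of_le (k + 1) ((h k).2 hk) (by push_cast; rfl)

lemma exists_eq_append_cons_append_cons_of_not_nodup :
    ∀ {l : List α}, ¬ l.Nodup → ∃ (a b c : List α) (x : α), l = a ++ x :: (b ++ x :: c)
  | [], h => absurd List.nodup_nil h
  | y :: t, h => by
    rw [List.nodup_cons, not_and_or, not_not] at h
    rcases h with hy | ht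
    · obtain ⟨b, c, rfl⟩ := List.append_of_mem hy
      exact ⟨[], b, c, y, rfl⟩
    · obtain ⟨a, b, c, x, rfl⟩ := exists_eq_append_cons_append_cons_of_not_nodup ht
      exact ⟨y :: a, b, c, x, rfl⟩

lemma exists_isSimpleSeq_pathArcs_le [DecidableEq α] (p : List α) {u v : α}
    (hu : p.head? = some u) (hv : p.getLast? = some v) :
    ∃ q, IsSimpleSeq q u v ∧ pathArcs q ≤ pathArcs p := by
  obtain ⟨n, hn⟩ : ∃ n, p.length = n := ⟨_, rfl⟩
  induction n using Nat.strong_induction_on generalizing p with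
  | _ n ih =>
    by_cases hp : p.Nodup
    · exact ⟨p, ⟨hp, hu, hv⟩, le_rfl⟩
    obtain ⟨a, b, c, x, rfl⟩ := exists_eq_append_cons_append_cons_of_not_nodup hp
    have harcs : pathArcs (a ++ x :: c) ≤ pathArcs (a ++ x :: (b ++ x :: c)) := by
      rw [pathArcs_append_cons a x c, pathArcs_append_cons a x (b ++ x :: c), ← List.cons_append,
        pathArcs_append_cons (x :: b) x c]
      exact add_le_add le_rfl (Multiset.le_add_left _ _)
    obtain ⟨q, hq, hle⟩ := ih _ (by simp at hn ⊢; omega) (a ++ x :: c)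
      (by simpa using hu) (by simpa [List.getLast?_cons] using hv) rfl
    exact ⟨q, hq, hle.trans harcs⟩

lemma IsSimpleSeq.eq_cons_cons {p : List α} {u v x : α} (hp : IsSimpleSeq p u v)
    (hx : (u, x) ∈ pathArcs p) : ∃ t, p = u :: x :: t := by
  obtain ⟨_ | ⟨a, l₁⟩, l₂, rfl⟩ := mem_pathArcs_iff.1 hx
  · exact ⟨l₂, rfl⟩
  · obtain rfl : a = u := by simpa using hp.2.1
    exact absurd hp.1 (by simp)

lemma IsSimpleSeq.eq_append_pair {p : List α} {u v x : α} (hp : IsSimpleSeq p u v)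
    (hx : (x, v) ∈ pathArcs p) : ∃ w, p = w ++ [x, v] := by
  obtain ⟨l₁, _ | ⟨b, l₂⟩, rfl⟩ := mem_pathArcs_iff.1 hx
  · exact ⟨l₁, rfl⟩
  · have hlast : (b :: l₂).getLast? = some v := by simpa using hp.2.2
    have hnd := hp.1
    simp only [List.nodup_append, List.nodup_cons, List.mem_cons] at hnd
    exact (hnd.2.1.2.1 (List.mem_cons.1 (List.mem_of_getLast? hlast))).elim

lemma exists_isSimpleSeq_of_mem_pathArcs [DecidableEq α] {p p' : List α} {r v s : α}
    (hp : IsSimpleSeq p r s) (hp' : IsSimpleSeq p' r s)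
    (hrv : (r, v) ∈ pathArcs p) (hvs : (v, s) ∈ pathArcs p') :
    ∃ q, IsSimpleSeq q r s ∧ (r, v) ::ₘ (v, s) ::ₘ pathArcs q ≤ pathArcs p + pathArcs p' := by
  obtain ⟨t, rfl⟩ := hp.eq_cons_cons hrv
  obtain ⟨w, rfl⟩ := hp'.eq_append_pair hvs
  obtain ⟨q, hq, hle⟩ :=
    exists_isSimpleSeq_pathArcs_le (w ++ v :: t) (by simpa using hp'.2.1) (by simpa using hp.2.2)
  refine ⟨q, hq, ?_⟩
  calc (r, v) ::ₘ (v, s) ::ₘ pathArcs q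
      ≤ (r, v) ::ₘ (v, s) ::ₘ pathArcs (w ++ v :: t) :=
        Multiset.cons_le_cons _ (Multiset.cons_le_cons _ hle)
    _ = pathArcs (r :: v :: t) + pathArcs (w ++ [v, s]) := by
      rw [pathArcs_append_cons, pathArcs_append_cons w v [s], pathArcs_cons_cons]
      simp only [pathArcs_cons_cons, pathArcs_singleton, Multiset.cons_zero]
      rw [← Multiset.singleton_add, ← Multiset.singleton_add, ← Multiset.singleton_add]
      abel

namespace IsPathFamily

variable {A : Multiset (α × α)} {u v : α} {P : Multiset (List α)}

lemma erase [DecidableEq α] {A' : Multiset (α × α)} (hP : IsPathFamily A' u v P) (p : List α)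
    (h : ((P.erase p).map pathArcs).sum ≤ A) : IsPathFamily A u v (P.erase p) :=
  ⟨fun q hq => hP.1 q (Multiset.mem_of_mem_erase hq), h⟩

lemma cons_cons_of_ne {r v s : α} (hP : IsPathFamily A r s P)
    (hrv : r ≠ v) (hvs : v ≠ s) (hrs : r ≠ s) :
    IsPathFamily ((r, v) ::ₘ (v, s) ::ₘ A) r s ([r, v, s] ::ₘ P) := by
  refine ⟨fun p hp => ?_, ?_⟩
  · rcases Multiset.mem_cons.1 hp with rfl | hp
    · exact ⟨by simp [hrv, hvs, hrs], rfl, rfl⟩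
    · exact hP.1 p hp
  · simpa using Multiset.cons_le_cons (r, v) (Multiset.cons_le_cons (v, s) hP.2)

lemma exists_of_merge [DecidableEq α] {r v s : α}
    (hP : IsPathFamily ((r, v) ::ₘ (v, s) ::ₘ A) r s P) {p p' : List α} (hp : p ∈ P)
    (hp' : p' ∈ P.erase p) (hrv : (r, v) ∈ pathArcs p) (hvs : (v, s) ∈ pathArcs p') :
    ∃ Q, Multiset.card Q + 1 = Multiset.card P ∧ IsPathFamily A r s Q := by
  obtain ⟨q, hq, hqarcs⟩ := exists_isSimpleSeq_of_mem_pathArcs (hP.1 p hp)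
    (hP.1 p' (Multiset.mem_of_mem_erase hp')) hrv hvs
  set R := (P.erase p).erase p'
  refine ⟨q ::ₘ R, ?_, fun x hx => ?_, ?_⟩
  · rw [Multiset.card_cons, Multiset.card_erase_add_one hp', Multiset.card_erase_add_one hp]
  · rcases Multiset.mem_cons.1 hx with rfl | hx
    · exact hq
    · exact hP.1 x (Multiset.mem_of_mem_erase (Multiset.mem_of_mem_erase hx))
  · have hsum : (P.map pathArcs).sum = pathArcs p + pathArcs p' + (R.map pathArcs).sum := by
      rw [← Multiset.sum_map_erase hp, ← Multiset.sum_map_erase hp', add_assoc]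
    have := (add_le_add hqarcs le_rfl).trans (hsum ▸ hP.2)
    rw [Multiset.map_cons, Multiset.sum_cons]
    simpa only [Multiset.cons_add, Multiset.cons_le_cons_iff] using this

lemma exists_of_add_two_arcs [DecidableEq α] {r v s : α}
    (hP : IsPathFamily ((r, v) ::ₘ (v, s) ::ₘ A) r s P) (hne : P ≠ 0) :
    ∃ Q, Multiset.card Q + 1 = Multiset.card P ∧ IsPathFamily A r s Q := by
  by_cases h₁ : ∃ p ∈ P, (r, v) ∈ pathArcs p
  · obtain ⟨p, hp, hp₁⟩ := h₁
    by_cases h₂ : ∃ p' ∈ P.erase p, (v, s) ∈ pathArcs p'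
    · obtain ⟨p', hp', hp'₂⟩ := h₂
      exact hP.exists_of_merge hp hp' hp₁ hp'₂
    · have hrest := Multiset.sum_map_erase_le_of_mem hp hp₁ hP.2
      rw [Multiset.le_cons_of_notMem (Multiset.mem_sum_map_iff.not.2 h₂)] at hrest
      exact ⟨_, Multiset.card_erase_add_one hp, hP.erase p hrest⟩
  · have hsum := hP.2
    rw [Multiset.le_cons_of_notMem (Multiset.mem_sum_map_iff.not.2 h₁)] at hsum
    obtain ⟨p, hp, hrest⟩ := Multiset.exists_sum_map_erase_le hne hsum
    exact ⟨_, Multiset.card_erase_add_one hp, hP.erase p hrest⟩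

end IsPathFamily

lemma exists_isPathFamily_add_two_arcs_iff [DecidableEq α] {A : Multiset (α × α)} {r v s : α}
    {k : ℕ} (hrv : r ≠ v) (hvs : v ≠ s) (hrs : r ≠ s) :
    (∃ P, Multiset.card P = k + 1 ∧ IsPathFamily ((r, v) ::ₘ (v, s) ::ₘ A) r s P) ↔
      ∃ P, Multiset.card P = k ∧ IsPathFamily A r s P := by
  constructor
  · rintro ⟨P, hcard, hP⟩
    obtain ⟨Q, hQ, hQP⟩ := hP.exists_of_add_two_arcs (by rintro rfl; simp at hcard)
    exact ⟨Q, by omega, hQP⟩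
  · rintro ⟨P, rfl, hP⟩
    exact ⟨_, Multiset.card_cons _ _, hP.cons_cons_of_ne hrv hvs hrs⟩

end MDigraph

theorem lambda_add_two_arcs_general {α : Type} (D D' : MDigraph α) (r v s : α)
    (hr : r ∈ D.verts)
    (hA : D'.arcs = (r, v) ::ₘ (v, s) ::ₘ D.arcs) :
    D'.lambda r s = D.lambda r s + 1 := by
  classical
  have hrv_mem : (r, v) ∈ D'.arcs := by simp [hA]
  have hvs_mem : (v, s) ∈ D'.arcs := by simp [hA]
  refine MDigraph.lambda_eq_add_one fun k => ?_
  obtain rfl | hrs := eq_or_ne r s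
  · exact iff_of_true (MDigraph.hasArcDisjointPaths_self (D'.tail_mem _ hrv_mem) _)
      (MDigraph.hasArcDisjointPaths_self hr _)
  rw [MDigraph.hasArcDisjointPaths_iff_of_ne hrs, MDigraph.hasArcDisjointPaths_iff_of_ne hrs, hA]
  exact MDigraph.exists_isPathFamily_add_two_arcs_iff (D'.loopless _ hrv_mem)
    (D'.loopless _ hvs_mem) hrs

/-- Let `D` be a directed graph and `r, v, s` vertices of `D`, and
let `D'` be obtained from `D` by adding one new arc from `r` to `v` and one new arc
from `v` to `s`. Then `λ_{D'}(r, s) = λ_D(r, s) + 1`. -/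
theorem lambda_add_two_arcs {α : Type} (D D' : MDigraph α) (r v s : α)
    (hr : r ∈ D.verts) (hv : v ∈ D.verts) (hs : s ∈ D.verts)
    (hV : D'.verts = D.verts)
    (hA : D'.arcs = (r, v) ::ₘ (v, s) ::ₘ D.arcs) :
    D'.lambda r s = D.lambda r s + 1 :=
  lambda_add_two_arcs_general D D' r v s hr hA
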